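/- arXiv:1509.04366 — 3 statements merged into one kernel-verified Lean document; each statement's English description precedes it below -/
import Mathlib

section
/- Let $T_a, T_s, d_s > 0$ with $T_a = p\,g$, $T_s = q\,g$ for coprime positive integers $p, q$ and real $g > 0$ with $g \leq d_s \leq T_s$. Suppose an advertiser transmits at times $t_{a0} + i T_a$ ($i \in \mathbb{N}_0$) and the scanner's windows are $[j T_s - d_s, j T_s]$ ($j \in \mathbb{N}_0$, $j \geq 1$). Then for every $t_{a0} \in [0, T_s]$ there exist $i, j \in \mathbb{N}_0$ with $j T_s - d_s \leq t_{a0} + i T_a \leq j T_s$; i.e., discovery is guaranteed. -/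
/-!
Measure time in units of `g`. The packet time `ta0` lies in a cell `[m g, (m + 1) g]`, and since
`g ≤ ds` the scan window ending at the grid point `(m + 1) g` contains that whole cell. Shifting
by `i Ta = i p g` moves the grid point to `(m + 1 + i p) g`, and as `p` is invertible modulo `q`
some `i` makes `m + 1 + i p` a multiple `j q` of `q`, i.e. the end `j Ts` of a scan window.
-/

theorem Nat.exists_dvd_add_mul_of_coprime {p q : ℕ} (hq : 0 < q) (hcop : p.Coprime q) (n : ℕ) :
    ∃ i, q ∣ n + i * p := by
  have : NeZero q := ⟨hq.ne'⟩
  refine ⟨(-(n : ZMod q) * (p : ZMod q)⁻¹).val, (ZMod.natCast_eq_zero_iff _ _).mp ?_⟩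
  rw [Nat.cast_add, Nat.cast_mul, ZMod.natCast_zmod_val, mul_assoc, mul_comm _ (p : ZMod q),
    ZMod.coe_mul_inv_eq_one p hcop]
  ring

theorem exists_nat_mul_le_le_succ_mul {g t : ℝ} (hg : 0 < g) (ht : 0 ≤ t) :
    ∃ m : ℕ, (m : ℝ) * g ≤ t ∧ t ≤ ((m : ℝ) + 1) * g :=
  ⟨⌊t / g⌋₊, (le_div_iff₀ hg).mp (Nat.floor_le (div_nonneg ht hg.le)),
    ((div_le_iff₀ hg).mp (Nat.lt_floor_add_one (t / g)).le)⟩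

theorem discovery_guaranteed_commensurable_general
    (Ta Ts ds g : ℝ) (p q : ℕ) (hq : 0 < q)
    (hcop : Nat.Coprime p q) (hg : 0 < g)
    (hTa : Ta = (p : ℝ) * g) (hTs : Ts = (q : ℝ) * g)
    (hgds : g ≤ ds)
    (ta0 : ℝ) (h0 : 0 ≤ ta0) :
    ∃ i j : ℕ, 1 ≤ j ∧
      (j : ℝ) * Ts - ds ≤ ta0 + (i : ℝ) * Ta ∧
      ta0 + (i : ℝ) * Ta ≤ (j : ℝ) * Ts := by
  obtain ⟨m, hm_le, hm_ge⟩ := exists_nat_mul_le_le_succ_mul hg h0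
  obtain ⟨i, j, hj⟩ := Nat.exists_dvd_add_mul_of_coprime hq hcop (m + 1)
  have hj_pos : 1 ≤ j := Nat.pos_of_ne_zero (by rintro rfl; omega)
  have hjTs : (j : ℝ) * Ts = ((m : ℝ) + 1) * g + i * Ta := by
    have hj' : (j : ℝ) * q = m + 1 + i * p := by exact_mod_cast (hj.trans (mul_comm q j)).symm
    rw [hTs, hTa, ← mul_assoc, hj']
    ring
  exact ⟨i, j, hj_pos, by linarith, by linarith⟩

/-- Discovery guarantee for commensurable intervals with common measure
`g ≤ ds`: every initial packet time is eventually captured by a scan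
window. -/
theorem discovery_guaranteed_commensurable
    (Ta Ts ds g : ℝ) (p q : ℕ) (hp : 0 < p) (hq : 0 < q)
    (hcop : Nat.Coprime p q) (hg : 0 < g)
    (hTa : Ta = (p : ℝ) * g) (hTs : Ts = (q : ℝ) * g)
    (hgds : g ≤ ds) (hdsTs : ds ≤ Ts)
    (ta0 : ℝ) (h0 : 0 ≤ ta0) (h1 : ta0 ≤ Ts) :
    ∃ i j : ℕ, 1 ≤ j ∧
      (j : ℝ) * Ts - ds ≤ ta0 + (i : ℝ) * Ta ∧
      ta0 + (i : ℝ) * Ta ≤ (j : ℝ) * Ts :=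
  discovery_guaranteed_commensurable_general Ta Ts ds g p q hq hcop hg hTa hTs hgds ta0 h0
end

section
/- Under the hypotheses of the previous discovery guarantee ($T_a = p g$, $T_s = q g$, $\gcd(p,q)=1$, $0 < g \leq d_s$), for every $t_{a0} \in [0, T_s]$ the minimal index $i$ at which discovery occurs satisfies $i \leq q - 1$; hence the worst-case discovery latency is at most $(q-1) \cdot T_a + d_a$ where $d_a \geq 0$ is the packet duration. -/
/-! Measure time in units of `g` and pick `m ≥ 1` with `t_{a0} ∈ [(m - 1) g, m g]`.
Since `p` is invertible modulo `q`, some `i < q` makes `m + i p` a multiple `j q` of `q`; then the `i`-th advertisement lies in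
`[j T_s - g, j T_s] ⊆ [j T_s - d_s, j T_s]`. -/

theorem Nat.exists_lt_dvd_add_mul_of_coprime {p q : ℕ} [NeZero q] (hcop : p.Coprime q)
    (m : ℕ) : ∃ i < q, q ∣ m + i * p := by
  let u := ZMod.unitOfCoprime p hcop
  refine ⟨(-(m : ZMod q) * ↑u⁻¹).val, ZMod.val_lt _, ?_⟩
  rw [← ZMod.natCast_eq_zero_iff]
  have hu : ((u⁻¹ : (ZMod q)ˣ) : ZMod q) * p = 1 := by
    rw [← ZMod.coe_unitOfCoprime p hcop, Units.inv_mul]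
  push_cast [ZMod.natCast_zmod_val]
  linear_combination (-(m : ZMod q)) * hu

theorem exists_nat_pos_sub_one_mul_le_le_mul {K : Type*} [Field K] [LinearOrder K]
    [IsStrictOrderedRing K] [FloorSemiring K] {g t : K} (hg : 0 < g) (ht : 0 ≤ t) :
    ∃ m : ℕ, 1 ≤ m ∧ ((m : K) - 1) * g ≤ t ∧ t ≤ m * g := by
  refine ⟨⌊t / g⌋₊ + 1, Nat.le_add_left 1 _, ?_, ?_⟩
  · push_cast
    rw [add_sub_cancel_right, ← le_div_iff₀ hg]
    exact Nat.floor_le (div_nonneg ht hg.le)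
  · rw [← div_le_iff₀ hg]
    exact_mod_cast (Nat.lt_floor_add_one (t / g)).le

theorem worst_case_latency_commensurable_general
    (Ta Ts ds g da : ℝ) (p q : ℕ) (hq : 0 < q)
    (hcop : Nat.Coprime p q) (hg : 0 < g)
    (hTa : Ta = (p : ℝ) * g) (hTs : Ts = (q : ℝ) * g)
    (hgds : g ≤ ds)
    (ta0 : ℝ) (h0 : 0 ≤ ta0) :
    ∃ i j : ℕ, i ≤ q - 1 ∧ 1 ≤ j ∧
      (j : ℝ) * Ts - ds ≤ ta0 + (i : ℝ) * Ta ∧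
      ta0 + (i : ℝ) * Ta ≤ (j : ℝ) * Ts ∧
      (i : ℝ) * Ta + da ≤ ((q : ℝ) - 1) * Ta + da := by
  have : NeZero q := ⟨hq.ne'⟩
  obtain ⟨m, hm, hlow, hhigh⟩ := exists_nat_pos_sub_one_mul_le_le_mul hg h0
  obtain ⟨i, hiq, j, hj⟩ := Nat.exists_lt_dvd_add_mul_of_coprime hcop m
  have hj1 : 1 ≤ j := Nat.pos_of_ne_zero (by rintro rfl; omega)
  have hjTs : (j : ℝ) * Ts = ((m : ℝ) + i * p) * g := by
    have hqj : (q : ℝ) * j = m + i * p := by exact_mod_cast hj.symm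
    rw [hTs, ← hqj]; ring
  have hiq' : (i : ℝ) ≤ q - 1 := by
    rw [le_sub_iff_add_le]
    exact_mod_cast hiq
  have hTa0 : 0 ≤ Ta := hTa ▸ by positivity
  refine ⟨i, j, by omega, hj1, ?_, ?_, ?_⟩
  · rw [hjTs, hTa]; linarith
  · rw [hjTs, hTa]; linarith
  · gcongr

/-- Worst-case latency bound for commensurable intervals: discovery occurs at
some advertising index `i ≤ q - 1`, hence the worst-case discovery latency is
at most `(q - 1) * Ta + da`. -/
theorem worst_case_latency_commensurable
    (Ta Ts ds g da : ℝ) (p q : ℕ) (hp : 0 < p) (hq : 0 < q)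
    (hcop : Nat.Coprime p q) (hg : 0 < g)
    (hTa : Ta = (p : ℝ) * g) (hTs : Ts = (q : ℝ) * g)
    (hgds : g ≤ ds) (hdsTs : ds ≤ Ts) (hda : 0 ≤ da)
    (ta0 : ℝ) (h0 : 0 ≤ ta0) (h1 : ta0 ≤ Ts) :
    ∃ i j : ℕ, i ≤ q - 1 ∧ 1 ≤ j ∧
      (j : ℝ) * Ts - ds ≤ ta0 + (i : ℝ) * Ta ∧
      ta0 + (i : ℝ) * Ta ≤ (j : ℝ) * Ts ∧
      (i : ℝ) * Ta + da ≤ ((q : ℝ) - 1) * Ta + da :=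
  worst_case_latency_commensurable_general Ta Ts ds g da p q hq hcop hg hTa hTs hgds ta0 h0
end

section
/- Let $p > 0$ be a probability density on a segment split as in the growToRight() Case 1/2 with $N_u \geq N_l \geq 0$, $\gamma \leq d_s$, lengths $d_{Nu}, d_{Nl} \geq 0$ and middle part $(N_u - N_l)\gamma$, and penalty $\sigma > 0$. Then the simplified partial latency $\overline{d_p} = p\,\sigma\,\big(d_{Nl} N_l + \tfrac{1}{2}\gamma (N_u - N_l)(N_u + N_l + 1) + d_{Nu}(N_u + 1)\big)$ equals $p\,\sigma \int_l^r \lceil (T_s - d_s - t)/\gamma \rceil \, dt$ where $l, r$ are the segment endpoints, $N_l = \lceil (T_s - d_s - r)/\gamma \rceil$, $N_u = \lfloor (T_s - d_s - l)/\gamma \rfloor$, $d_{Nu} = (T_s - d_s - N_u\gamma) - l$, $d_{Nl} = r - (T_s - d_s - N_l\gamma)$, assuming $T_s - d_s - r > 0$. -/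
/-!
After the substitution `s = (Ts - ds - t) / γ` the integral becomes `γ ∫ ⌈s⌉ ds` over
`[a, b] = [(Ts - ds - r) / γ, (Ts - ds - l) / γ]`. On `[a, ⌈a⌉]` the integrand is `⌈a⌉ = N_l`,
on `[⌊b⌋, b]` it is `⌊b⌋ + 1 = N_u + 1`, and on `[N_l, N_u]` it takes the value `k` on each
unit step `(k - 1, k]`, which gives the triangular sum. Computing both ends through
`∫₀ⁿ ⌈s⌉ ds = n (n + 1) / 2`, valid for every integer `n`, the decomposition holds for all `a, b`.
-/

open intervalIntegral

namespace Int

lemma monotone_cast_ceil : Monotone (fun s : ℝ => (⌈s⌉ : ℝ)) :=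
  fun _ _ h => cast_le.mpr (ceil_mono h)

lemma intervalIntegrable_cast_ceil (a b : ℝ) :
    IntervalIntegrable (fun s : ℝ => (⌈s⌉ : ℝ)) MeasureTheory.volume a b :=
  monotone_cast_ceil.intervalIntegrable

lemma integral_cast_ceil_of_mem_Icc {n : ℤ} {a b : ℝ} (ha : a ∈ Set.Icc ((n : ℝ) - 1) n)
    (hb : b ∈ Set.Icc ((n : ℝ) - 1) n) :
    ∫ s in a..b, (⌈s⌉ : ℝ) = n * (b - a) := by
  rw [integral_congr_ae (g := fun _ => (n : ℝ)) ?_, integral_const, smul_eq_mul, mul_comm]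
  refine Filter.Eventually.of_forall fun x hx => ?_
  have hx' : x ∈ Set.Ioc ((n : ℝ) - 1) n := by
    rw [Set.mem_uIoc] at hx
    constructor <;> rcases hx with hx | hx <;> linarith [ha.1, ha.2, hb.1, hb.2, hx.1, hx.2]
  simp only [ceil_eq_iff.mpr hx']

lemma integral_zero_cast_ceil_intCast (n : ℤ) :
    ∫ s in (0 : ℝ)..n, (⌈s⌉ : ℝ) = n * (n + 1) / 2 := by
  have hsucc (k : ℤ) :
      ∫ s in (0 : ℝ)..((k + 1 : ℤ) : ℝ), (⌈s⌉ : ℝ) = (∫ s in (0 : ℝ)..k, (⌈s⌉ : ℝ)) + (k + 1) := by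
    rw [← integral_add_adjacent_intervals (b := (k : ℝ)) (intervalIntegrable_cast_ceil _ _)
      (intervalIntegrable_cast_ceil _ _),
      integral_cast_ceil_of_mem_Icc (n := k + 1) (a := k) (by push_cast; constructor <;> linarith)
        (by push_cast; constructor <;> linarith)]
    push_cast; ring
  induction n using Int.induction_on with
  | zero => simp
  | succ i ih => rw [hsucc, ih]; push_cast; ring
  | pred i ih =>
    have := hsucc (-i - 1)
    rw [show -(i : ℤ) - 1 + 1 = -i by ring, ih] at this
    push_cast at this ⊢
    linarith

lemma integral_zero_cast_ceil_eq_floor (x : ℝ) :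
    ∫ s in (0 : ℝ)..x, (⌈s⌉ : ℝ) = ⌊x⌋ * (⌊x⌋ + 1) / 2 + (⌊x⌋ + 1) * (x - ⌊x⌋) := by
  have hx : x ∈ Set.Icc (((⌊x⌋ + 1 : ℤ) : ℝ) - 1) ((⌊x⌋ + 1 : ℤ) : ℝ) := by
    push_cast; exact ⟨by linarith [floor_le x], by linarith [lt_floor_add_one x]⟩
  rw [← integral_add_adjacent_intervals (b := (⌊x⌋ : ℝ)) (intervalIntegrable_cast_ceil _ _)
    (intervalIntegrable_cast_ceil _ _), integral_zero_cast_ceil_intCast,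
    integral_cast_ceil_of_mem_Icc (a := ⌊x⌋) (by push_cast; constructor <;> linarith) hx]
  push_cast; ring

lemma integral_zero_cast_ceil_eq_ceil (x : ℝ) :
    ∫ s in (0 : ℝ)..x, (⌈s⌉ : ℝ) = ⌈x⌉ * (⌈x⌉ + 1) / 2 - ⌈x⌉ * (⌈x⌉ - x) := by
  have hx : x ∈ Set.Icc ((⌈x⌉ : ℝ) - 1) ⌈x⌉ :=
    ⟨by linarith [ceil_lt_add_one x], le_ceil x⟩
  rw [← integral_add_adjacent_intervals (b := (⌈x⌉ : ℝ)) (intervalIntegrable_cast_ceil _ _)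
    (intervalIntegrable_cast_ceil _ _), integral_zero_cast_ceil_intCast,
    integral_cast_ceil_of_mem_Icc (a := ⌈x⌉) (by constructor <;> linarith) hx]
  ring

lemma integral_cast_ceil (a b : ℝ) :
    ∫ s in a..b, (⌈s⌉ : ℝ) = ⌈a⌉ * (⌈a⌉ - a) + (⌊b⌋ - ⌈a⌉) * (⌊b⌋ + ⌈a⌉ + 1) / 2
      + (⌊b⌋ + 1) * (b - ⌊b⌋) := by
  rw [← integral_interval_sub_left (a := 0) (intervalIntegrable_cast_ceil _ _)
    (intervalIntegrable_cast_ceil _ _), integral_zero_cast_ceil_eq_floor,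
    integral_zero_cast_ceil_eq_ceil]
  ring

end Int

theorem partial_latency_closed_form_general
    (Ts ds γ l r p σ : ℝ)
    (hγ : 0 < γ)
    (Nl Nu : ℤ)
    (hNl : Nl = ⌈(Ts - ds - r) / γ⌉)
    (hNu : Nu = ⌊(Ts - ds - l) / γ⌋)
    (dNu dNl : ℝ)
    (hdNu : dNu = (Ts - ds - (Nu : ℝ) * γ) - l)
    (hdNl : dNl = r - (Ts - ds - (Nl : ℝ) * γ)) :
    p * σ * (dNl * (Nl : ℝ) +
        (1 / 2) * γ * ((Nu : ℝ) - (Nl : ℝ)) * ((Nu : ℝ) + (Nl : ℝ) + 1) +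
        dNu * ((Nu : ℝ) + 1))
      = p * σ * ∫ t in l..r, (⌈(Ts - ds - t) / γ⌉ : ℝ) := by
  have hsub : ∫ t in l..r, (⌈(Ts - ds - t) / γ⌉ : ℝ)
      = γ * ∫ s in (Ts - ds - r) / γ..(Ts - ds - l) / γ, (⌈s⌉ : ℝ) := by
    simp_rw [sub_div (Ts - ds)]
    exact integral_comp_sub_div (fun s => (⌈s⌉ : ℝ)) hγ.ne' _
  rw [hsub, Int.integral_cast_ceil, ← hNl, ← hNu, hdNu, hdNl]
  field_simp
  ring

/-- Closed form for the simplified partial latency in growToRight() when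
`γ ≤ ds`: the probability-weighted latency contribution equals the integral
of the step-count function over the segment. -/
theorem partial_latency_closed_form
    (Ts ds γ l r p σ : ℝ)
    (hp : 0 < p) (hσ : 0 < σ) (hγ : 0 < γ) (hγds : γ ≤ ds)
    (hlr : l < r) (hr : 0 < Ts - ds - r)
    (Nl Nu : ℤ)
    (hNl : Nl = ⌈(Ts - ds - r) / γ⌉)
    (hNu : Nu = ⌊(Ts - ds - l) / γ⌋)
    (hNl0 : 0 ≤ Nl) (hNlNu : Nl ≤ Nu)
    (dNu dNl : ℝ)
    (hdNu : dNu = (Ts - ds - (Nu : ℝ) * γ) - l)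
    (hdNl : dNl = r - (Ts - ds - (Nl : ℝ) * γ))
    (hdNu0 : 0 ≤ dNu) (hdNl0 : 0 ≤ dNl) :
    p * σ * (dNl * (Nl : ℝ) +
        (1 / 2) * γ * ((Nu : ℝ) - (Nl : ℝ)) * ((Nu : ℝ) + (Nl : ℝ) + 1) +
        dNu * ((Nu : ℝ) + 1))
      = p * σ * ∫ t in l..r, (⌈(Ts - ds - t) / γ⌉ : ℝ) :=
  partial_latency_closed_form_general Ts ds γ l r p σ hγ Nl Nu hNl hNu dNu dNl hdNu hdNl
end
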